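/- Let Γ be a projective nonsingular irreducible complex curve of genus γ which is Petri with respect to pencils, with γ ≥ 2n−2−γ ≥ 1. Let x+y ∈ Γ_2, let (L,V) ∈ N^1_n(x+y), let B be the fixed divisor of (L,V), and let M: V ⊗ H^0(ω_Γ L^{-1}(x+y)) → H^0(ω_Γ(x+y)) be the multiplication map. Then: (a) ker(M) ≅ H^0(ω_Γ L^{-2}(x+y+B)) ≅ H^1(L^2(−x−y−B))^∨; (b) dim ker(M) ≤ 1; (c) if x occurs in B then M is injective. -/

import Mathlib

/-!
We formalize statements of Bruno–Sernesi, "The symmetric square of a curve and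
the Petri map".

A smooth projective irreducible complex curve `Γ` is presented through its
field of rational functions `K` (a `ℂ`-algebra which is a field), the divisor
map `div : K → Div(Γ)`, a chosen canonical divisor, and the Riemann–Roch spaces
`RR D = H⁰(Γ, O(D)) ⊆ K` of divisors.  Divisors on `Γ` are finitely supported
`ℤ`-valued functions on the set of (closed) points.  Invertible sheaves are
represented by divisors (every line bundle is `O(D)` for some divisor `D`, and
all the notions below are invariant under linear equivalence).
-/

open Module Function
open scoped TensorProduct

noncomputable section

/-- The degree of a divisor. -/
def divDegree {Point : Type} (D : Point →₀ ℤ) : ℤ := D.sum fun _ n => n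

/-- A smooth projective irreducible curve over `ℂ`, presented via its function
field, divisors of rational functions, a canonical divisor and its
Riemann–Roch spaces. -/
structure CurveData (Point K : Type) [Field K] [Algebra ℂ K] : Type where
  /-- the genus of the curve -/
  genus : ℕ
  /-- the divisor of a (nonzero) rational function -/
  div : K → (Point →₀ ℤ)
  /-- a canonical divisor, i.e. the divisor of a rational 1-form; `O(canonical) = ω_Γ` -/
  canonical : Point →₀ ℤ
  /-- the Riemann–Roch space `H⁰(Γ, O(D)) ⊆ K` of a divisor `D` -/
  RR : (Point →₀ ℤ) → Submodule ℂ K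
  mem_RR : ∀ (D : Point →₀ ℤ) (f : K), f ∈ RR D ↔ f = 0 ∨ 0 ≤ D + div f
  div_mul : ∀ f g : K, f ≠ 0 → g ≠ 0 → div (f * g) = div f + div g
  div_algebraMap : ∀ c : ℂ, c ≠ 0 → div ((algebraMap ℂ K) c) = 0
  finiteDimensional_RR : ∀ D, FiniteDimensional ℂ (RR D)
  degree_div : ∀ f : K, f ≠ 0 → divDegree (div f) = 0
  degree_canonical : divDegree canonical = 2 * (genus : ℤ) - 2
  /-- the Riemann–Roch theorem: `h⁰(D) - h⁰(K - D) = deg D + 1 - γ` -/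
  riemannRoch : ∀ D : Point →₀ ℤ,
    (finrank ℂ (RR D) : ℤ) - (finrank ℂ (RR (canonical - D)) : ℤ)
      = divDegree D + 1 - (genus : ℤ)

namespace CurveData

variable {Point K : Type} [Field K] [Algebra ℂ K]

/-- The divisor given by a single point. -/
def pt (x : Point) : Point →₀ ℤ := Finsupp.single x 1

/-- The multiplication map `V ⊗ W → K` induced by the multiplication of the
function field on two subspaces `V, W ⊆ K`.  For `V ⊆ H⁰(L)` and
`W ⊆ H⁰(M)` it takes values in `H⁰(LM) ⊆ K`, so its injectivity is equivalent
to that of the multiplication map `V ⊗ W → H⁰(LM)`. -/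
def mulMap (V W : Submodule ℂ K) : (V ⊗[ℂ] W) →ₗ[ℂ] K :=
  TensorProduct.lift (((LinearMap.mul ℂ K).comp V.subtype).compl₂ W.subtype)

variable (C : CurveData Point K)

/-- `h⁰(D) = dim H⁰(Γ, O(D))`. -/
def h0 (D : Point →₀ ℤ) : ℕ := finrank ℂ (C.RR D)

/-- `h¹(D) = dim H¹(Γ, O(D))`, computed via Serre duality as `h⁰(K - D)`. -/
def h1 (D : Point →₀ ℤ) : ℕ := finrank ℂ (C.RR (C.canonical - D))

/-- `(O(D), V)` is a linear pencil (a `g¹_n` with `n = deg D`): `V` is a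
2-dimensional subspace of `H⁰(O(D))`. -/
def IsPencil (D : Point →₀ ℤ) (V : Submodule ℂ K) : Prop :=
  V ≤ C.RR D ∧ finrank ℂ V = 2

/-- The Petri map `μ₀(L,V) : V ⊗ H⁰(ω_Γ L⁻¹) → H⁰(ω_Γ)` of the pencil
`(L,V) = (O(D), V)`, viewed as a map into `K`; its injectivity is equivalent to
the injectivity of the Petri map. -/
def petriMap (D : Point →₀ ℤ) (V : Submodule ℂ K) :
    (V ⊗[ℂ] (C.RR (C.canonical - D))) →ₗ[ℂ] K :=
  mulMap V (C.RR (C.canonical - D))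

/-- `Γ` is Petri with respect to pencils: the Petri map of every linear pencil
(of any degree) is injective. -/
def PetriWrtPencils : Prop :=
  ∀ (D : Point →₀ ℤ) (V : Submodule ℂ K), C.IsPencil D V →
    Function.Injective (C.petriMap D V)

/-- `x` is a base point of the linear series `(O(D), V)`. -/
def IsBasePoint (D : Point →₀ ℤ) (V : Submodule ℂ K) (x : Point) : Prop :=
  V ≤ C.RR (D - pt x)

/-- `(O(D), V)` is base-point free. -/
def BasePointFree (D : Point →₀ ℤ) (V : Submodule ℂ K) : Prop :=
  ∀ x : Point, ¬ C.IsBasePoint D V x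

/-- `B` is the fixed divisor of the linear series `(O(D), V)`: the largest
effective divisor contained in all divisors of the series. -/
def IsFixedDivisor (D : Point →₀ ℤ) (V : Submodule ℂ K) (B : Point →₀ ℤ) : Prop :=
  0 ≤ B ∧ V ≤ C.RR (D - B) ∧ ∀ B' : Point →₀ ℤ, 0 ≤ B' → V ≤ C.RR (D - B') → B' ≤ B

/-- `(O(D), V)` is complete, i.e. `V = H⁰(O(D))`. -/
def IsComplete (D : Point →₀ ℤ) (V : Submodule ℂ K) : Prop :=
  V = C.RR D

/-- The pencil `(O(D), V)` is neutral with respect to `x + y ∈ Γ₂`, i.e.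
`V(-x-y) ≠ 0`. -/
def IsNeutral (D : Point →₀ ℤ) (V : Submodule ℂ K) (x y : Point) : Prop :=
  V ⊓ C.RR (D - pt x - pt y) ≠ ⊥

/-- The pencil `(O(D), V)` has only simple ramification: every divisor of the
pencil contains each point with multiplicity at most 2, and contains at most
one double point. -/
def SimpleRamification (D : Point →₀ ℤ) (V : Submodule ℂ K) : Prop :=
  ∀ f : K, f ∈ V → f ≠ 0 →
    (∀ z : Point, (D + C.div f) z ≤ 2) ∧ {z : Point | (D + C.div f) z = 2}.Subsingleton

end CurveData

end

/-
Write `L = O(D)` and `V = ⟨f, g⟩`. The fixed divisor is `B = D + min(div f, div g)`, so the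
base-point-free pencil trick `h ↦ f ⊗ hg - g ⊗ hf` identifies the kernel of `V ⊗ H⁰(N) → K`
with `H⁰(N + B - D)`; for `N = ω L⁻¹(x+y)` this is (a). Taking instead `N = ω (L(-E))⁻¹` with
`E ≤ B`, the pencil `(L(-E), V)` is Petri, so `h⁰(ω L⁻²(B + E)) = 0`.

Adding a point `p` to `ω L⁻²(B + E)` does not raise `h⁰` when `E(p) = B(p)`: by Riemann–Roch
this says that `p` is not a base point of `|L²(-B-E)|`, and `v²` is a section of it not
vanishing at `p` as soon as `v ∈ V` meets `p` with multiplicity exactly `B(p)`, which some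
`v` does by maximality of `B`. Hence `h⁰(ω L⁻²(B + x)) = 0` (take `E = x` if `x ∈ B`, `E = 0`
otherwise), and adding `y` gives (b). If `x ∈ B`, then either `x + y ≤ B`, or `E = x` has
`E(y) = B(y)`; in both cases `h⁰(ω L⁻²(B + x + y)) = 0`, which is (c).
-/

lemma Submodule.le_of_forall_basis_mem {ι R M : Type*} [Semiring R] [AddCommMonoid M]
    [Module R M] {V S : Submodule R M} (b : Basis ι R V) (hb : ∀ i, (b i : M) ∈ S) : V ≤ S :=
  calc V = (⊤ : Submodule R V).map V.subtype := V.map_subtype_top.symm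
    _ = Submodule.span R (Set.range fun i => (b i : M)) := by
      rw [← b.span_eq, Submodule.map_span, ← Set.range_comp]; rfl
    _ ≤ S := Submodule.span_le.2 (Set.range_subset_iff.2 hb)

lemma TensorProduct.eq_basis_tmul_add_basis_tmul {R M N : Type*} [CommSemiring R]
    [AddCommMonoid M] [Module R M] [AddCommMonoid N] [Module R N] (b : Basis (Fin 2) R M)
    (κ : M ⊗[R] N) :
    κ = b 0 ⊗ₜ equivFinsuppOfBasisLeft b κ 0 + b 1 ⊗ₜ equivFinsuppOfBasisLeft b κ 1 := by
  conv_lhs => rw [← (equivFinsuppOfBasisLeft b).symm_apply_apply κ]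
  rw [equivFinsuppOfBasisLeft_symm_apply, Finsupp.sum_fintype _ _ (by simp), Fin.sum_univ_two]

namespace CurveData

variable {Point K : Type} [Field K] [Algebra ℂ K]

lemma pt_nonneg (p : Point) : 0 ≤ pt p := Finsupp.single_nonneg.2 zero_le_one

lemma pt_le_iff {E : Point →₀ ℤ} (hE : 0 ≤ E) (p : Point) : pt p ≤ E ↔ 1 ≤ E p := by
  classical
  refine ⟨fun h => by simpa [pt] using h p, fun h => Finsupp.le_def.2 fun z => ?_⟩
  by_cases hz : p = z
  · simpa [pt, hz] using hz ▸ h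
  · simpa [pt, hz] using hE z

lemma divDegree_add (E F : Point →₀ ℤ) : divDegree (E + F) = divDegree E + divDegree F :=
  Finsupp.sum_add_index' (fun _ => rfl) fun _ _ _ => rfl

lemma divDegree_pt (p : Point) : divDegree (pt p) = 1 := by
  simp [divDegree, pt]

lemma mulMap_tmul (V W : Submodule ℂ K) (v : V) (w : W) :
    mulMap V W (v ⊗ₜ w) = (v : K) * (w : K) := rfl

theorem nonempty_inf_comap_mulRight_equiv_ker_mulMap (V W : Submodule ℂ K)
    (b : Basis (Fin 2) ℂ V) :
    Nonempty (↥(W.comap (LinearMap.mulRight ℂ (b 0 : K)) ⊓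
        W.comap (LinearMap.mulRight ℂ (b 1 : K))) ≃ₗ[ℂ] LinearMap.ker (mulMap V W)) := by
  set f : K := (b 0 : K)
  set g : K := (b 1 : K)
  set H := W.comap (LinearMap.mulRight ℂ f) ⊓ W.comap (LinearMap.mulRight ℂ g)
  have hg : g ≠ 0 := by simpa [g] using b.ne_zero 1
  let mulBy (u : K) (hu : H ≤ W.comap (LinearMap.mulRight ℂ u)) : H →ₗ[ℂ] W :=
    ((LinearMap.mulRight ℂ u).comp H.subtype).codRestrict W fun h => hu h.2
  let Φ : H →ₗ[ℂ] V ⊗[ℂ] W :=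
    (TensorProduct.mk ℂ V W (b 0)).comp (mulBy g inf_le_right) +
      (TensorProduct.mk ℂ V W (b 1)).comp (-mulBy f inf_le_left)
  have hΦ (h : H) : Φ h ∈ LinearMap.ker (mulMap V W) := by
    simp only [LinearMap.mem_ker, Φ, LinearMap.add_apply, LinearMap.comp_apply,
      TensorProduct.mk_apply, LinearMap.neg_apply, map_add, mulMap_tmul]
    simp only [mulBy, LinearMap.codRestrict_apply, LinearMap.comp_apply, Submodule.subtype_apply,
      LinearMap.mulRight_apply, Submodule.coe_neg, f, g]
    ring
  let e := TensorProduct.equivFinsuppOfBasisLeft (N := W) b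
  refine ⟨LinearEquiv.ofBijective (Φ.codRestrict _ hΦ) ⟨?_, ?_⟩⟩
  · refine (injective_iff_map_eq_zero _).2 fun h hh => ?_
    have : (h : K) * g = 0 := by
      simpa [Φ, e, mulBy, TensorProduct.equivFinsuppOfBasisLeft_apply_tmul] using
        congrArg (fun κ => (e κ 0 : K)) (congrArg Subtype.val hh)
    exact Subtype.ext ((mul_eq_zero.1 this).resolve_right hg)
  · rintro ⟨κ, hκ⟩
    have hκ' := TensorProduct.eq_basis_tmul_add_basis_tmul b κ
    have hfg : f * e κ 0 + g * e κ 1 = 0 := by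
      rwa [hκ', LinearMap.mem_ker, map_add, mulMap_tmul, mulMap_tmul] at hκ
    have hhg : e κ 0 * g⁻¹ * g = e κ 0 := inv_mul_cancel_right₀ hg _
    have hhf : e κ 0 * g⁻¹ * f = -(e κ 1 : K) := by
      field_simp
      linear_combination hfg
    have hH : e κ 0 * g⁻¹ ∈ H := ⟨by simp [hhf], by simp [hhg]⟩
    refine ⟨⟨_, hH⟩, Subtype.ext ?_⟩
    have h₀ : mulBy g inf_le_right ⟨_, hH⟩ = e κ 0 := Subtype.ext hhg
    have h₁ : (-mulBy f inf_le_left) ⟨_, hH⟩ = e κ 1 := by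
      ext; simp [mulBy, hhf]
    simp only [LinearMap.codRestrict_apply, Φ, LinearMap.add_apply, LinearMap.comp_apply,
      TensorProduct.mk_apply, h₀, h₁]
    exact hκ'.symm

variable (C : CurveData Point K)

instance (E : Point →₀ ℤ) : FiniteDimensional ℂ (C.RR E) := C.finiteDimensional_RR E

lemma mem_RR_iff_of_ne_zero {f : K} (hf : f ≠ 0) (E : Point →₀ ℤ) :
    f ∈ C.RR E ↔ ∀ z, 0 ≤ E z + C.div f z := by
  simp [C.mem_RR, hf, Finsupp.le_def]

lemma mem_RR_sub_iff {f : K} (hf : f ≠ 0) (D E : Point →₀ ℤ) :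
    f ∈ C.RR (D - E) ↔ E ≤ D + C.div f := by
  simp only [C.mem_RR_iff_of_ne_zero hf, Finsupp.le_def, Finsupp.sub_apply, Finsupp.add_apply]
  exact forall_congr' fun z => by omega

lemma RR_mono {E F : Point →₀ ℤ} (h : E ≤ F) : C.RR E ≤ C.RR F := fun f hf => by
  rw [C.mem_RR] at hf ⊢
  exact hf.imp_right fun hf => hf.trans (add_le_add_left h _)

lemma comap_mulRight_RR {u : K} (hu : u ≠ 0) (N : Point →₀ ℤ) :
    (C.RR N).comap (LinearMap.mulRight ℂ u) = C.RR (N + C.div u) := by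
  ext h
  rcases eq_or_ne h 0 with rfl | hh
  · simp
  simp only [Submodule.mem_comap, LinearMap.mulRight_apply,
    C.mem_RR_iff_of_ne_zero (mul_ne_zero hh hu), C.mem_RR_iff_of_ne_zero hh,
    C.div_mul h u hh hu, Finsupp.add_apply]
  exact forall_congr' fun z => by omega

lemma RR_inf (E F : Point →₀ ℤ) : C.RR E ⊓ C.RR F = C.RR (E ⊓ F) := by
  ext f
  rcases eq_or_ne f 0 with rfl | hf
  · simp
  simp only [Submodule.mem_inf, C.mem_RR_iff_of_ne_zero hf, Finsupp.inf_apply, ← forall_and]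
  exact forall_congr' fun z => by omega

lemma finrank_RR_add_pt (E : Point →₀ ℤ) (p : Point) :
    (finrank ℂ (C.RR (E + pt p)) : ℤ) - finrank ℂ (C.RR E) =
      1 - (finrank ℂ (C.RR (C.canonical - E)) - finrank ℂ (C.RR (C.canonical - E - pt p))) := by
  have h₁ := C.riemannRoch (E + pt p)
  have h₂ := C.riemannRoch E
  rw [divDegree_add, divDegree_pt, ← sub_sub] at h₁
  linarith

lemma finrank_RR_add_pt_le (E : Point →₀ ℤ) (p : Point) :
    finrank ℂ (C.RR (E + pt p)) ≤ finrank ℂ (C.RR E) + 1 := by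
  have h := C.finrank_RR_add_pt E p
  have hmono := Submodule.finrank_mono (C.RR_mono (sub_le_self (C.canonical - E) (pt_nonneg p)))
  omega

lemma finrank_RR_canonical_sub_add_pt {F : Point →₀ ℤ} {p : Point} {s : K}
    (hs : s ∈ C.RR F) (hs' : s ∉ C.RR (F - pt p)) :
    finrank ℂ (C.RR (C.canonical - F + pt p)) = finrank ℂ (C.RR (C.canonical - F)) := by
  have h := C.finrank_RR_add_pt (C.canonical - F) p
  rw [sub_sub_cancel] at h
  have hlt := Submodule.finrank_lt_finrank_of_lt
    (SetLike.lt_iff_le_and_exists.2 ⟨C.RR_mono (sub_le_self F (pt_nonneg p)), s, hs, hs'⟩)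
  have hmono := Submodule.finrank_mono (C.RR_mono (le_add_of_nonneg_right (pt_nonneg p) :
    C.canonical - F ≤ C.canonical - F + pt p))
  omega

section FixedDivisor

variable {C} {D B : Point →₀ ℤ} {V : Submodule ℂ K}

lemma IsFixedDivisor.eq_add_inf (hB : C.IsFixedDivisor D V B) (b : Basis (Fin 2) ℂ V) :
    B = D + C.div (b 0) ⊓ C.div (b 1) := by
  have hb (i : Fin 2) : (b i : K) ≠ 0 := by simpa using b.ne_zero i
  have hle (E : Point →₀ ℤ) : V ≤ C.RR (D - E) ↔ E ≤ D + C.div (b 0) ⊓ C.div (b 1) := by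
    rw [add_inf, le_inf_iff, ← C.mem_RR_sub_iff (hb 0), ← C.mem_RR_sub_iff (hb 1)]
    exact ⟨fun h => ⟨h (b 0).2, h (b 1).2⟩,
      fun h => Submodule.le_of_forall_basis_mem b (Fin.forall_fin_two.2 h)⟩
  have hBle := (hle B).1 hB.2.1
  exact le_antisymm hBle (hB.2.2 _ (hB.1.trans hBle) ((hle _).2 le_rfl))

lemma IsFixedDivisor.exists_apply_eq (hB : C.IsFixedDivisor D V B) (z : Point) :
    ∃ v ∈ V, v ≠ 0 ∧ (D + C.div v) z = B z := by
  by_contra! h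
  have hle : V ≤ C.RR (D - (B + pt z)) := fun v hv => by
    rcases eq_or_ne v 0 with rfl | hv0
    · exact zero_mem _
    have hBv : B ≤ D + C.div v := (C.mem_RR_sub_iff hv0 _ _).1 (hB.2.1 hv)
    rw [C.mem_RR_sub_iff hv0, ← le_sub_iff_add_le', pt_le_iff (sub_nonneg.2 hBv)]
    have := h v hv hv0
    have := Finsupp.le_def.1 hBv z
    simp only [Finsupp.sub_apply]
    omega
  have := Finsupp.le_def.1 (hB.2.2 _ (add_nonneg hB.1 (pt_nonneg z)) hle) z
  simp [pt] at this

end FixedDivisor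

theorem nonempty_ker_mulMap_equiv_RR {D B : Point →₀ ℤ} {V : Submodule ℂ K}
    (hV : finrank ℂ V = 2) (hB : C.IsFixedDivisor D V B) (N : Point →₀ ℤ) :
    Nonempty (LinearMap.ker (mulMap V (C.RR N)) ≃ₗ[ℂ] C.RR (N + B - D)) := by
  have : FiniteDimensional ℂ V := Module.finite_of_finrank_eq_succ hV
  let b := Module.finBasisOfFinrankEq ℂ V hV
  have hb (i : Fin 2) : (b i : K) ≠ 0 := by simpa using b.ne_zero i
  obtain ⟨e⟩ := nonempty_inf_comap_mulRight_equiv_ker_mulMap V (C.RR N) b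
  rw [C.comap_mulRight_RR (hb 0), C.comap_mulRight_RR (hb 1), C.RR_inf, ← add_inf] at e
  refine ⟨e.symm.trans (LinearEquiv.ofEq _ _ ?_)⟩
  rw [hB.eq_add_inf b]
  abel_nf

theorem RR_canonical_sub_two_smul_add_eq_bot (hPetri : C.PetriWrtPencils)
    {D B E : Point →₀ ℤ} {V : Submodule ℂ K} (hV : finrank ℂ V = 2)
    (hB : C.IsFixedDivisor D V B) (hEB : E ≤ B) :
    C.RR (C.canonical - 2 • D + B + E) = ⊥ := by
  have hinj := hPetri (D - E) V ⟨hB.2.1.trans (C.RR_mono (sub_le_sub_left hEB D)), hV⟩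
  obtain ⟨e⟩ := C.nonempty_ker_mulMap_equiv_RR hV hB (C.canonical - (D - E))
  rw [show C.canonical - (D - E) + B - D = C.canonical - 2 • D + B + E by rw [two_smul]; abel]
    at e
  have hker : LinearMap.ker (mulMap V (C.RR (C.canonical - (D - E)))) = ⊥ :=
    LinearMap.ker_eq_bot_of_injective hinj
  rw [← Submodule.finrank_eq_zero, ← e.finrank_eq, hker, finrank_bot]

theorem finrank_RR_canonical_sub_two_smul_add_pt {D B E : Point →₀ ℤ} {V : Submodule ℂ K}
    (hB : C.IsFixedDivisor D V B) (hEB : E ≤ B) {p : Point} (hp : E p = B p) :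
    finrank ℂ (C.RR (C.canonical - 2 • D + B + E + pt p)) =
      finrank ℂ (C.RR (C.canonical - 2 • D + B + E)) := by
  obtain ⟨v, hv, hv0, hvp⟩ := hB.exists_apply_eq p
  have hvB := Finsupp.le_def.1 ((C.mem_RR_sub_iff hv0 _ _).1 (hB.2.1 hv))
  have hvv := mul_ne_zero hv0 hv0
  have h := C.finrank_RR_canonical_sub_add_pt (F := 2 • D - B - E) (p := p) (s := v * v) ?_ ?_
  · rwa [show C.canonical - (2 • D - B - E) = C.canonical - 2 • D + B + E by abel] at h
  · rw [C.mem_RR_iff_of_ne_zero hvv, C.div_mul _ _ hv0 hv0]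
    intro z
    have := hvB z
    have := Finsupp.le_def.1 hEB z
    simp only [Finsupp.sub_apply, Finsupp.add_apply, two_smul] at *
    omega
  · rw [C.mem_RR_iff_of_ne_zero hvv, C.div_mul _ _ hv0 hv0]
    push Not
    refine ⟨p, ?_⟩
    simp only [Finsupp.sub_apply, Finsupp.add_apply, two_smul, pt, Finsupp.single_eq_same] at *
    omega

theorem RR_canonical_sub_two_smul_add_pt_eq_bot (hPetri : C.PetriWrtPencils)
    {D B : Point →₀ ℤ} {V : Submodule ℂ K} (hV : finrank ℂ V = 2)
    (hB : C.IsFixedDivisor D V B) (x : Point) :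
    C.RR (C.canonical - 2 • D + B + pt x) = ⊥ := by
  by_cases hBx : 1 ≤ B x
  · exact C.RR_canonical_sub_two_smul_add_eq_bot hPetri hV hB ((pt_le_iff hB.1 x).2 hBx)
  · have hB0 : 0 ≤ B x := Finsupp.le_def.1 hB.1 x
    have h := C.finrank_RR_canonical_sub_two_smul_add_pt hB hB.1 (p := x)
      (by rw [Finsupp.coe_zero, Pi.zero_apply]; omega)
    rw [add_zero] at h
    rw [← Submodule.finrank_eq_zero, h, Submodule.finrank_eq_zero]
    simpa using C.RR_canonical_sub_two_smul_add_eq_bot hPetri hV hB hB.1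

theorem RR_canonical_sub_two_smul_add_pt_add_pt_eq_bot (hPetri : C.PetriWrtPencils)
    {D B : Point →₀ ℤ} {V : Submodule ℂ K} (hV : finrank ℂ V = 2)
    (hB : C.IsFixedDivisor D V B) {x : Point} (hBx : 1 ≤ B x) (y : Point) :
    C.RR (C.canonical - 2 • D + B + pt x + pt y) = ⊥ := by
  have hxB := (pt_le_iff hB.1 x).2 hBx
  have hxBy := Finsupp.le_def.1 hxB y
  by_cases hy : pt x y < B y
  · rw [add_assoc]
    refine C.RR_canonical_sub_two_smul_add_eq_bot hPetri hV hB ?_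
    rw [← le_sub_iff_add_le', pt_le_iff (sub_nonneg.2 hxB), Finsupp.sub_apply]
    omega
  · rw [← Submodule.finrank_eq_zero,
      C.finrank_RR_canonical_sub_two_smul_add_pt hB hxB (by omega), Submodule.finrank_eq_zero]
    exact C.RR_canonical_sub_two_smul_add_eq_bot hPetri hV hB hxB

end CurveData

open CurveData in
theorem ker_of_neutral_multiplication_map_general
    (Point K : Type) [Field K] [Algebra ℂ K] (C : CurveData Point K)
    (hPetri : C.PetriWrtPencils)
    (x y : Point) (D : Point →₀ ℤ)
    (V : Submodule ℂ K) (hP : C.IsPencil D V)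
    (B : Point →₀ ℤ) (hB : C.IsFixedDivisor D V B) :
    (Nonempty (↥(LinearMap.ker
        (mulMap V (C.RR (C.canonical - D + pt x + pt y)))) ≃ₗ[ℂ]
      ↥(C.RR (C.canonical - 2 • D + pt x + pt y + B))) ∧
     Nonempty (↥(LinearMap.ker
        (mulMap V (C.RR (C.canonical - D + pt x + pt y)))) ≃ₗ[ℂ]
      Module.Dual ℂ ↥(C.RR (C.canonical - (2 • D - pt x - pt y - B))))) ∧
    finrank ℂ ↥(LinearMap.ker
        (mulMap V (C.RR (C.canonical - D + pt x + pt y)))) ≤ 1 ∧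
    (1 ≤ B x → Function.Injective
        (mulMap V (C.RR (C.canonical - D + pt x + pt y)))) := by
  obtain ⟨e⟩ := C.nonempty_ker_mulMap_equiv_RR hP.2 hB (C.canonical - D + pt x + pt y)
  rw [show C.canonical - D + pt x + pt y + B - D = C.canonical - 2 • D + B + pt x + pt y by
    rw [two_smul]; abel] at e
  rw [show C.canonical - 2 • D + pt x + pt y + B = C.canonical - 2 • D + B + pt x + pt y by abel,
    show C.canonical - (2 • D - pt x - pt y - B) = C.canonical - 2 • D + B + pt x + pt y by abel]
  refine ⟨⟨⟨e⟩, ⟨e.trans (Module.finBasis ℂ _).toDualEquiv⟩⟩, ?_, fun hBx => ?_⟩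
  · have h := C.finrank_RR_add_pt_le (C.canonical - 2 • D + B + pt x) y
    rwa [C.RR_canonical_sub_two_smul_add_pt_eq_bot hPetri hP.2 hB x, finrank_bot, ← e.finrank_eq]
      at h
  · have : Subsingleton (C.RR (C.canonical - 2 • D + B + pt x + pt y)) := by
      rw [C.RR_canonical_sub_two_smul_add_pt_add_pt_eq_bot hPetri hP.2 hB hBx y]
      infer_instance
    refine (injective_iff_map_eq_zero _).2 fun m hm => ?_
    exact congrArg Subtype.val (e.injective (a₁ := ⟨m, hm⟩) (a₂ := 0) (Subsingleton.elim _ _))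

open CurveData in
/-- Lemma 5.3.  Let `Γ` be a projective nonsingular
irreducible complex curve of genus `γ`, Petri with respect to pencils, with
`γ ≥ 2n - 2 - γ ≥ 1`.  Let `x + y ∈ Γ₂`, let `(L,V) = (O(D),V) ∈ N¹_n(x+y)`
(i.e. a `g¹_n` on `Γ` which is neutral with respect to `x+y`), let `B` be its
fixed divisor, and let
`M : V ⊗ H⁰(ω_Γ L⁻¹(x+y)) → H⁰(ω_Γ(x+y))` be the multiplication map (realized
as a map into `K`).  Then:
(a) `ker M ≅ H⁰(ω_Γ L⁻²(x+y+B)) ≅ H¹(L²(-x-y-B))ᵛ` (we model `H¹(E)` by its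
Serre dual `H⁰(ω_Γ(-E)) = RR (canonical - E)`, so `H¹(L²(-x-y-B))ᵛ` is the
dual of `RR (canonical - (2D - x - y - B))`);
(b) `dim ker M ≤ 1`;
(c) if `x` occurs in `B` then `M` is injective. -/
theorem ker_of_neutral_multiplication_map
    (Point K : Type) [Field K] [Algebra ℂ K] (C : CurveData Point K)
    (hPetri : C.PetriWrtPencils)
    (n : ℤ) (hρ1 : 1 ≤ 2 * n - 2 - (C.genus : ℤ))
    (hρ2 : 2 * n - 2 - (C.genus : ℤ) ≤ (C.genus : ℤ))
    (x y : Point) (D : Point →₀ ℤ) (hdeg : divDegree D = n)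
    (V : Submodule ℂ K) (hP : C.IsPencil D V) (hneu : C.IsNeutral D V x y)
    (B : Point →₀ ℤ) (hB : C.IsFixedDivisor D V B) :
    (Nonempty (↥(LinearMap.ker
        (mulMap V (C.RR (C.canonical - D + pt x + pt y)))) ≃ₗ[ℂ]
      ↥(C.RR (C.canonical - 2 • D + pt x + pt y + B))) ∧
     Nonempty (↥(LinearMap.ker
        (mulMap V (C.RR (C.canonical - D + pt x + pt y)))) ≃ₗ[ℂ]
      Module.Dual ℂ ↥(C.RR (C.canonical - (2 • D - pt x - pt y - B))))) ∧
    finrank ℂ ↥(LinearMap.ker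
        (mulMap V (C.RR (C.canonical - D + pt x + pt y)))) ≤ 1 ∧
    (1 ≤ B x → Function.Injective
        (mulMap V (C.RR (C.canonical - D + pt x + pt y)))) :=
  ker_of_neutral_multiplication_map_general Point K C hPetri x y D V hP B hB
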